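/- Let R be a polynomial ring over a field, let U ⊆ R be an ideal, and let ≺ be a term order such that in_≺(U) is a squarefree monomial ideal satisfying in_≺(U)^(ℓ) = in_≺(U)^ℓ for all ℓ ≥ 1. Then U^(ℓ) = U^ℓ for all ℓ ≥ 1, where U^(ℓ) denotes the ℓ-th symbolic power. -/

import Mathlib

open MvPolynomial

variable {K : Type*} [Field K]

/-- The exponent of the initial (leading) term of a polynomial `f` with respect to a
monomial order `mo`: the largest exponent in the support of `f`. -/
noncomputable def leadExp {σ : Type*} (mo : MonomialOrder σ) (f : MvPolynomial σ K) :
    σ →₀ ℕ :=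
  mo.toSyn.symm (f.support.sup ⇑mo.toSyn)

/-- The initial ideal `in_mo(U)`: the ideal generated by the initial monomials of the
nonzero elements of `U`. -/
noncomputable def initialIdeal {σ : Type*} (mo : MonomialOrder σ)
    (U : Ideal (MvPolynomial σ K)) : Ideal (MvPolynomial σ K) :=
  Ideal.span { g | ∃ f ∈ U, f ≠ 0 ∧ g = (monomial (leadExp mo f) (1 : K)) }

/-- `W` is a squarefree monomial ideal: it is generated by monomials with squarefree
exponents. -/
def IsSquarefreeMonomialIdeal {σ : Type*} (W : Ideal (MvPolynomial σ K)) : Prop :=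
  ∃ S : Set (σ →₀ ℕ), (∀ d ∈ S, ∀ i, d i ≤ 1) ∧
    W = Ideal.span ((fun d => (monomial d (1 : K) : MvPolynomial σ K)) '' S)

/-- The symbolic power `I^{(n)} = ⋂_{p ∈ Min(I)} (pⁿ R_p ∩ R)`. -/
noncomputable def symbolicPower {R : Type*} [CommRing R] (I : Ideal R) (n : ℕ) : Ideal R :=
  ⨅ p : {q : Ideal R // q ∈ I.minimalPrimes},
    letI : p.1.IsPrime := p.2.1.1
    ((p.1 ^ n).map (algebraMap R (Localization.AtPrime p.1))).comap
      (algebraMap R (Localization.AtPrime p.1))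

namespace Aux

variable {σ : Type*} (mo : MonomialOrder σ)

theorem le_leadExp {f : MvPolynomial σ K} {c : σ →₀ ℕ} (hc : c ∈ f.support) :
    mo.toSyn c ≤ mo.toSyn (leadExp mo f) := by
  rw [leadExp, AddEquiv.apply_symm_apply]
  exact Finset.le_sup hc

theorem leadExp_mem_support {f : MvPolynomial σ K} (hf : f ≠ 0) :
    leadExp mo f ∈ f.support := by
  obtain ⟨b, hb, hb'⟩ := Finset.exists_mem_eq_sup f.support
    (by simpa using hf) ⇑mo.toSyn
  rw [leadExp, hb', AddEquiv.symm_apply_apply]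
  exact hb

theorem coeff_leadExp_ne_zero {f : MvPolynomial σ K} (hf : f ≠ 0) :
    coeff (leadExp mo f) f ≠ 0 := by
  simpa [mem_support_iff] using leadExp_mem_support mo hf

theorem leadExp_eq_of {f : MvPolynomial σ K} {b : σ →₀ ℕ} (hb : b ∈ f.support)
    (hmax : ∀ c ∈ f.support, mo.toSyn c ≤ mo.toSyn b) : leadExp mo f = b := by
  have h1 : mo.toSyn (leadExp mo f) ≤ mo.toSyn b :=
    hmax _ (leadExp_mem_support mo (by rintro rfl; simp at hb))
  have h2 := le_leadExp mo hb
  exact mo.toSyn.injective (le_antisymm h1 h2)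

theorem leadExp_monomial {b : σ →₀ ℕ} {c : K} (hc : c ≠ 0) :
    leadExp mo (monomial b c) = b := by
  classical
  apply leadExp_eq_of
  · rw [mem_support_iff, MvPolynomial.coeff_monomial, if_pos rfl]; exact hc
  · intro d hd
    rw [MvPolynomial.support_monomial, if_neg hc] at hd
    simp_all

theorem leadExp_one : leadExp mo (1 : MvPolynomial σ K) = 0 := by
  have := leadExp_monomial (σ := σ) mo (one_ne_zero (α := K)) (b := 0)
  simpa [MvPolynomial.monomial_zero'] using this

theorem coeff_leadExp_mul {f g : MvPolynomial σ K} (hf : f ≠ 0) (hg : g ≠ 0) :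
    coeff (leadExp mo f + leadExp mo g) (f * g)
      = coeff (leadExp mo f) f * coeff (leadExp mo g) g := by
  classical
  rw [MvPolynomial.coeff_mul]
  rw [Finset.sum_eq_single (leadExp mo f, leadExp mo g)]
  · intro uv huv hne
    rw [Finset.HasAntidiagonal.mem_antidiagonal] at huv
    by_contra hcon
    have hu : coeff uv.1 f ≠ 0 := fun h => hcon (by simp [h])
    have hv : coeff uv.2 g ≠ 0 := fun h => hcon (by simp [h])
    have h1 := le_leadExp mo (c := uv.1) (by simpa [mem_support_iff] using hu)
    have h2 := le_leadExp mo (c := uv.2) (by simpa [mem_support_iff] using hv)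
    have h1' : uv.1 = leadExp mo f := by
      by_contra hne1
      have : mo.toSyn uv.1 < mo.toSyn (leadExp mo f) :=
        lt_of_le_of_ne h1 (fun h => hne1 (mo.toSyn.injective h))
      have hlt : mo.toSyn uv.1 + mo.toSyn uv.2
          < mo.toSyn (leadExp mo f) + mo.toSyn (leadExp mo g) :=
        add_lt_add_of_lt_of_le this h2
      rw [← map_add, ← map_add, huv] at hlt
      exact lt_irrefl _ hlt
    have h2' : uv.2 = leadExp mo g := by
      have := huv
      rw [h1'] at this
      exact add_left_cancel this
    exact hne (Prod.ext h1' h2')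
  · intro h
    simp [Finset.HasAntidiagonal.mem_antidiagonal] at h
theorem leadExp_mul {f g : MvPolynomial σ K} (hf : f ≠ 0) (hg : g ≠ 0) :
    leadExp mo (f * g) = leadExp mo f + leadExp mo g := by
  classical
  have hcoeff := coeff_leadExp_mul mo hf hg
  have hne : coeff (leadExp mo f + leadExp mo g) (f * g) ≠ 0 := by
    rw [hcoeff]
    exact mul_ne_zero (coeff_leadExp_ne_zero mo hf) (coeff_leadExp_ne_zero mo hg)
  apply leadExp_eq_of
  · simpa [mem_support_iff] using hne
  · intro c hc
    rw [mem_support_iff] at hc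
    rw [MvPolynomial.coeff_mul] at hc
    obtain ⟨uv, huv, hterm⟩ := Finset.exists_ne_zero_of_sum_ne_zero hc
    rw [Finset.HasAntidiagonal.mem_antidiagonal] at huv
    have hu : coeff uv.1 f ≠ 0 := fun h => hterm (by simp [h])
    have hv : coeff uv.2 g ≠ 0 := fun h => hterm (by simp [h])
    have h1 := le_leadExp mo (c := uv.1) (by simpa [mem_support_iff] using hu)
    have h2 := le_leadExp mo (c := uv.2) (by simpa [mem_support_iff] using hv)
    calc mo.toSyn c = mo.toSyn uv.1 + mo.toSyn uv.2 := by rw [← map_add, huv]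
    _ ≤ _ := by rw [map_add]; exact add_le_add h1 h2

theorem mul_ne_zero' {f g : MvPolynomial σ K} (hf : f ≠ 0) (hg : g ≠ 0) : f * g ≠ 0 :=
  mul_ne_zero hf hg

theorem leadExp_pow {f : MvPolynomial σ K} (hf : f ≠ 0) (k : ℕ) :
    leadExp mo (f ^ k) = k • leadExp mo f := by
  induction k with
  | zero => simpa using leadExp_one mo
  | succ n ih =>
    rw [pow_succ, leadExp_mul mo (pow_ne_zero _ hf) hf, ih, succ_nsmul]


-- initial ideal lemmas
theorem lead_mem_initialIdeal {J : Ideal (MvPolynomial σ K)} {f : MvPolynomial σ K}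
    (hf : f ∈ J) (hf0 : f ≠ 0) :
    monomial (leadExp mo f) (1 : K) ∈ initialIdeal mo J :=
  Ideal.subset_span ⟨f, hf, hf0, rfl⟩

theorem initialIdeal_mul_le (A B : Ideal (MvPolynomial σ K)) :
    initialIdeal mo A * initialIdeal mo B ≤ initialIdeal mo (A * B) := by
  rw [initialIdeal, initialIdeal, Ideal.span_mul_span]
  rw [Ideal.span_le]
  intro x hx
  simp only [Set.mem_mul] at hx
  obtain ⟨g1, ⟨f1, hf1, hf10, rfl⟩, g2, ⟨f2, hf2, hf20, rfl⟩, rfl⟩ := hx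
  rw [MvPolynomial.monomial_mul, one_mul, ← leadExp_mul mo hf10 hf20]
  exact lead_mem_initialIdeal mo (Ideal.mul_mem_mul hf1 hf2) (mul_ne_zero hf10 hf20)

theorem initialIdeal_top : initialIdeal mo (⊤ : Ideal (MvPolynomial σ K)) = ⊤ := by
  rw [Ideal.eq_top_iff_one]
  have : (1 : MvPolynomial σ K) = monomial (leadExp mo (1 : MvPolynomial σ K)) (1 : K) := by
    rw [leadExp_one, MvPolynomial.monomial_zero']
    simp
  rw [this]
  exact lead_mem_initialIdeal mo trivial one_ne_zero

theorem initialIdeal_pow_le (U : Ideal (MvPolynomial σ K)) (k : ℕ) :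
    initialIdeal mo U ^ k ≤ initialIdeal mo (U ^ k) := by
  induction k with
  | zero => simp [initialIdeal_top]
  | succ n ih =>
    rw [pow_succ, pow_succ]
    calc initialIdeal mo U ^ n * initialIdeal mo U
        ≤ initialIdeal mo (U ^ n) * initialIdeal mo U := Ideal.mul_mono_left ih
      _ ≤ initialIdeal mo (U ^ n * U) := initialIdeal_mul_le mo _ _

/-- If a monomial (with nonzero coeff) lies in the span of a set of coeff-1 monomials,
some generator's exponent divides it. -/
theorem exists_le_of_monomial_mem_span {S : Set (MvPolynomial σ K)}
    (hS : ∀ g ∈ S, ∃ d : σ →₀ ℕ, g = monomial d (1 : K)) {b : σ →₀ ℕ}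
    (hb : (monomial b (1 : K)) ∈ Ideal.span S) :
    ∃ g ∈ S, ∃ d : σ →₀ ℕ, g = monomial d (1 : K) ∧ d ≤ b := by
  classical
  rw [Ideal.span] at hb
  obtain ⟨c, hsupp, hsum⟩ := Submodule.mem_span_set.mp hb
  have hcoeff : coeff b (c.sum fun mi r => r • mi) = 1 := by
    rw [hsum, MvPolynomial.coeff_monomial, if_pos rfl]
  rw [Finsupp.sum] at hcoeff
  have hne : ∃ mi ∈ c.support, coeff b (c mi • mi) ≠ 0 := by
    apply Finset.exists_ne_zero_of_sum_ne_zero (f := fun mi => coeff b (c mi • mi))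
    rw [← MvPolynomial.coeff_sum]
    rw [hcoeff]
    exact one_ne_zero
  obtain ⟨mi, hmi, hne0⟩ := hne
  obtain ⟨d, rfl⟩ := hS mi (hsupp hmi)
  refine ⟨_, hsupp hmi, d, rfl, ?_⟩
  rw [smul_eq_mul, MvPolynomial.coeff_mul_monomial'] at hne0
  by_contra hle
  rw [if_neg hle] at hne0
  exact hne0 rfl


variable {N : ℕ}

section FinN
variable (mo : MonomialOrder (Fin N))

/-- product of lead monomials over a finset -/
theorem leadExp_prod {ι : Type*} (s : Finset ι) (g : ι → MvPolynomial (Fin N) K)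
    (hg : ∀ i ∈ s, g i ≠ 0) :
    (∏ i ∈ s, g i) ≠ 0 ∧ leadExp mo (∏ i ∈ s, g i) = ∑ i ∈ s, leadExp mo (g i) := by
  classical
  induction s using Finset.induction with
  | empty => simpa using leadExp_one mo
  | @insert a s' hnotmem ih =>
    obtain ⟨h1, h2⟩ := ih (fun i hi => hg i (Finset.mem_insert_of_mem hi))
    have ha : g a ≠ 0 := hg a (Finset.mem_insert_self a s')
    rw [Finset.prod_insert hnotmem, Finset.sum_insert hnotmem]
    exact ⟨mul_ne_zero ha h1, by rw [leadExp_mul mo ha h1, h2]⟩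

theorem monomial_one_sum (s : Finset (Fin N →₀ ℕ))  : True := trivial

theorem monomial_sum_eq_prod {ι : Type*} (s : Finset ι) (d : ι → (Fin N →₀ ℕ)) :
    (monomial (∑ i ∈ s, d i) (1 : K)) = ∏ i ∈ s, monomial (d i) (1 : K) := by
  classical
  induction s using Finset.induction with
  | empty => simp
  | @insert a s' hnotmem ih =>
    rw [Finset.prod_insert hnotmem, Finset.sum_insert hnotmem, ← ih,
      MvPolynomial.monomial_mul, one_mul]

/-- G5: choose a minimal prime of U whose initial ideal is inside P -/
theorem exists_minimalPrime_initial_le {U : Ideal (MvPolynomial (Fin N) K)}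
    {P : Ideal (MvPolynomial (Fin N) K)} (hP : P.IsPrime)
    (hle : initialIdeal mo U ≤ P) :
    ∃ p ∈ U.minimalPrimes, initialIdeal mo p ≤ P := by
  classical
  -- U ≠ ⊤
  have hUtop : U ≠ ⊤ := by
    rintro rfl
    have h1 : (1 : MvPolynomial (Fin N) K) ∈ initialIdeal mo (⊤ : Ideal (MvPolynomial (Fin N) K)) := by
      have : (1 : MvPolynomial (Fin N) K) = monomial (leadExp mo (1 : MvPolynomial (Fin N) K)) (1 : K) := by
        rw [leadExp_one mo, MvPolynomial.monomial_zero']; simp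
      rw [this]
      exact lead_mem_initialIdeal mo trivial one_ne_zero
    exact hP.ne_top (Ideal.eq_top_iff_one _ |>.mpr (hle h1))
  -- finiteness of minimal primes
  have hfin : U.minimalPrimes.Finite := by
    rw [Ideal.minimalPrimes_eq_comap]
    exact Set.Finite.image _ (minimalPrimes.finite_of_isNoetherianRing _)
  by_contra hcon
  push_neg at hcon
  -- for each minimal prime, pick a counterexample generator
  have hpick : ∀ p ∈ U.minimalPrimes, ∃ g : MvPolynomial (Fin N) K,
      g ∈ p ∧ g ≠ 0 ∧ monomial (leadExp mo g) (1 : K) ∉ P := by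
    intro p hp
    have h := hcon p hp
    rw [initialIdeal, Ideal.span_le] at h
    obtain ⟨x, ⟨f, hf, hf0, rfl⟩, hxP⟩ := Set.not_subset.mp h
    exact ⟨f, hf, hf0, hxP⟩
  choose g0 hgmem hg0 hgP using hpick
  set g : Ideal (MvPolynomial (Fin N) K) → MvPolynomial (Fin N) K :=
    fun p => if h : p ∈ U.minimalPrimes then g0 p h else 1 with hgdef
  have hgmem' : ∀ p ∈ U.minimalPrimes, g p ∈ p := by
    intro p hp; rw [hgdef]; simpa only [dif_pos hp] using hgmem p hp
  have hg0' : ∀ p, g p ≠ 0 := by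
    intro p; rw [hgdef]
    by_cases h : p ∈ U.minimalPrimes
    · simpa only [dif_pos h] using hg0 p h
    · simpa only [dif_neg h] using one_ne_zero
  have hgP' : ∀ p ∈ U.minimalPrimes, monomial (leadExp mo (g p)) (1 : K) ∉ P := by
    intro p hp; rw [hgdef]; simpa only [dif_pos hp] using hgP p hp
  set s := hfin.toFinset with hs
  -- the product of the counterexamples
  set G : MvPolynomial (Fin N) K := ∏ p ∈ s, g p with hG
  obtain ⟨hGne, hGlead⟩ := leadExp_prod mo s g (fun p _ => hg0' p)
  -- G lies in every minimal prime, hence in the radical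
  have hGrad : G ∈ U.radical := by
    rw [← Ideal.sInf_minimalPrimes, Ideal.mem_sInf]
    intro p hp
    have hps : p ∈ s := (Set.Finite.mem_toFinset hfin).mpr hp
    rw [hG, ← Finset.prod_erase_mul s g hps]
    exact Ideal.mul_mem_left _ _ (hgmem' p hp)
  obtain ⟨k, hk⟩ := hGrad
  have hk0 : k ≠ 0 := by
    rintro rfl
    rw [pow_zero] at hk
    exact hUtop (Ideal.eq_top_iff_one _ |>.mpr hk)
  -- lead monomial of G^k lies in P
  have h1 : monomial (leadExp mo (G ^ k)) (1 : K) ∈ P :=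
    hle (lead_mem_initialIdeal mo hk (pow_ne_zero _ hGne))
  rw [leadExp_pow mo hGne k] at h1
  have h2 : (monomial (leadExp mo G) (1 : K)) ^ k ∈ P := by
    rw [MvPolynomial.monomial_pow, one_pow]
    exact h1
  have h3 : (monomial (leadExp mo G) (1 : K)) ∈ P := hP.mem_of_pow_mem k h2
  rw [hGlead, monomial_sum_eq_prod] at h3
  -- a prime containing a product contains a factor
  have h4 : ∃ p ∈ s, monomial (leadExp mo (g p)) (1 : K) ∈ P :=
    (Ideal.IsPrime.prod_mem_iff (hp := hP)).mp h3
  obtain ⟨p, hps, hmem⟩ := h4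
  exact hgP' p ((Set.Finite.mem_toFinset hfin).mp hps) hmem

/-- unpack membership in the contraction from the localization, in a domain -/
theorem exists_smul_mem_of_mem_comap {R : Type*} [CommRing R] [IsDomain R]
    {p : Ideal R} [hp : p.IsPrime] {I : Ideal R} {f : R}
    (hf : f ∈ (I.map (algebraMap R (Localization.AtPrime p))).comap
      (algebraMap R (Localization.AtPrime p))) :
    ∃ s : R, s ∉ p ∧ s * f ∈ I := by
  rw [Ideal.mem_comap, IsLocalization.mem_map_algebraMap_iff p.primeCompl] at hf
  obtain ⟨⟨x, s⟩, hx⟩ := hf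
  rw [← map_mul] at hx
  have hinj : Function.Injective (algebraMap R (Localization.AtPrime p)) :=
    IsLocalization.injective _ p.primeCompl_le_nonZeroDivisors
  have : f * (s : R) = (x : R) := hinj hx
  exact ⟨s, s.2, by rw [mul_comm]; rw [this]; exact x.2⟩

/-- membership in the symbolic power via all minimal primes -/
theorem mem_symbolicPower_iff {R : Type*} [CommRing R] {I : Ideal R} {n : ℕ} {f : R} :
    f ∈ symbolicPower I n ↔ ∀ p (hp : p ∈ I.minimalPrimes),
      letI : p.IsPrime := hp.1.1
      f ∈ ((p ^ n).map (algebraMap R (Localization.AtPrime p))).comap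
        (algebraMap R (Localization.AtPrime p)) := by
  rw [symbolicPower, Submodule.mem_iInf]
  exact ⟨fun h p hp => h ⟨p, hp⟩, fun h q => h q.1 q.2⟩

/-- Step A: ordinary powers are inside symbolic powers -/
theorem pow_le_symbolicPower {R : Type*} [CommRing R] (I : Ideal R) (n : ℕ) :
    I ^ n ≤ symbolicPower I n := by
  rw [symbolicPower]
  refine le_iInf fun p => ?_
  have hle : I ≤ p.1 := p.2.1.2
  calc I ^ n ≤ p.1 ^ n := Ideal.pow_right_mono hle n
    _ ≤ _ := Ideal.le_comap_map

/-- the ideal generated by the variables lying in P -/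
noncomputable def varSpan (P : Ideal (MvPolynomial (Fin N) K)) : Ideal (MvPolynomial (Fin N) K) :=
  Ideal.span ((fun i => (X i : MvPolynomial (Fin N) K)) '' {i | (X i : MvPolynomial (Fin N) K) ∈ P})

/-- the retraction killing the variables in P -/
noncomputable def varPhi (P : Ideal (MvPolynomial (Fin N) K)) :
    MvPolynomial (Fin N) K →ₐ[K] MvPolynomial (Fin N) K :=
  letI := Classical.dec
  aeval (fun i => if (X i : MvPolynomial (Fin N) K) ∈ P then (0 : MvPolynomial (Fin N) K) else X i)

theorem varPhi_eq_zero_of_mem {P : Ideal (MvPolynomial (Fin N) K)}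
    {g : MvPolynomial (Fin N) K} (hg : g ∈ varSpan P) : varPhi P g = 0 := by
  classical
  have : varSpan P ≤ RingHom.ker (varPhi P).toRingHom := by
    rw [varSpan, Ideal.span_le]
    rintro x ⟨i, hi, rfl⟩
    rw [SetLike.mem_coe, RingHom.mem_ker]
    show varPhi P (X i) = 0
    rw [varPhi, aeval_X]
    split
    · rfl
    · exact absurd hi (by assumption)
  exact this hg

theorem sub_varPhi_mem (P : Ideal (MvPolynomial (Fin N) K)) (g : MvPolynomial (Fin N) K) :
    g - varPhi P g ∈ varSpan P := by
  classical
  induction g using MvPolynomial.induction_on with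
  | C a => rw [show varPhi P (C a) = C a from aeval_C _ a]; simpa using (varSpan P).zero_mem
  | add f g hf hg =>
    rw [map_add]
    have : f + g - (varPhi P f + varPhi P g) = (f - varPhi P f) + (g - varPhi P g) := by ring
    rw [this]
    exact Ideal.add_mem _ hf hg
  | mul_X f i hf =>
    rw [map_mul]
    by_cases hi : (X i : MvPolynomial (Fin N) K) ∈ P
    · have hXi : varPhi P (X i) = 0 := by rw [varPhi, aeval_X, if_pos hi]
      rw [hXi, mul_zero, sub_zero]
      exact Ideal.mul_mem_left _ _ (Ideal.subset_span ⟨i, hi, rfl⟩)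
    · have hXi : varPhi P (X i) = X i := by rw [varPhi, aeval_X, if_neg hi]
      rw [hXi]
      have : f * X i - varPhi P f * X i = (f - varPhi P f) * X i := by ring
      rw [this]
      exact Ideal.mul_mem_right _ _ hf

theorem varSpan_isPrime (P : Ideal (MvPolynomial (Fin N) K)) : (varSpan P).IsPrime := by
  have : varSpan P = RingHom.ker (varPhi P).toRingHom := by
    apply le_antisymm
    · intro g hg
      rw [RingHom.mem_ker]
      exact varPhi_eq_zero_of_mem hg
    · intro g hg
      rw [RingHom.mem_ker] at hg
      have := sub_varPhi_mem P g
      rwa [show (varPhi P) g = ((varPhi P).toRingHom : MvPolynomial (Fin N) K →+* _) g from rfl,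
        hg, sub_zero] at this
  rw [this]
  exact RingHom.ker_isPrime _

/-- a minimal prime over a squarefree monomial ideal is generated by variables -/
theorem minimalPrime_eq_varSpan {W P : Ideal (MvPolynomial (Fin N) K)}
    (hsq : IsSquarefreeMonomialIdeal W) (hP : P ∈ W.minimalPrimes) :
    P = varSpan P := by
  classical
  obtain ⟨S, hS1, hS2⟩ := hsq
  haveI hPp : P.IsPrime := hP.1.1
  have hWP : W ≤ P := hP.1.2
  -- W ≤ varSpan P
  have hWv : W ≤ varSpan P := by
    rw [hS2, Ideal.span_le]
    rintro x ⟨d, hd, rfl⟩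
    have hdP : (monomial d (1 : K) : MvPolynomial (Fin N) K) ∈ P := by
      apply hWP
      rw [hS2]
      exact Ideal.subset_span ⟨d, hd, rfl⟩
    -- the monomial is a product of variables
    have hprod : (monomial d (1 : K) : MvPolynomial (Fin N) K)
        = ∏ i ∈ d.support, (X i : MvPolynomial (Fin N) K) ^ d i := by
      rw [MvPolynomial.monomial_eq, map_one, one_mul, Finsupp.prod]
    show (monomial d (1:K) : MvPolynomial (Fin N) K) ∈ varSpan P
    rw [hprod] at hdP ⊢
    obtain ⟨i, hi, hXi⟩ := (Ideal.IsPrime.prod_mem_iff (hp := hPp)).mp hdP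
    have hdi : d i = 1 := le_antisymm (hS1 d hd i) (Nat.one_le_iff_ne_zero.mpr
      (Finsupp.mem_support_iff.mp hi))
    have hXiP : (X i : MvPolynomial (Fin N) K) ∈ P := by
      rw [hdi, pow_one] at hXi
      exact hXi
    rw [← Finset.prod_erase_mul _ _ hi]
    refine Ideal.mul_mem_left _ _ ?_
    rw [hdi, pow_one]
    exact Ideal.subset_span ⟨i, hXiP, rfl⟩
  -- varSpan P ≤ P
  have hvP : varSpan P ≤ P := by
    rw [varSpan, Ideal.span_le]
    rintro x ⟨i, hi, rfl⟩
    exact hi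
  -- minimality
  exact le_antisymm (hP.2 ⟨varSpan_isPrime P, hWv⟩ hvP) hvP

/-- a product of elements of powers lies in the power of the sum -/
theorem prod_mem_pow_sum {R : Type*} [CommRing R] (P : Ideal R) {ι : Type*}
    (s : Finset ι) (n : ι → ℕ) (x : ι → R) (hx : ∀ i ∈ s, x i ∈ P ^ n i) :
    (∏ i ∈ s, x i) ∈ P ^ (∑ i ∈ s, n i) := by
  classical
  induction s using Finset.induction with
  | empty => simp
  | @insert a s' hnotmem ih =>
    rw [Finset.prod_insert hnotmem, Finset.sum_insert hnotmem, pow_add]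
    exact Ideal.mul_mem_mul (hx a (Finset.mem_insert_self a s'))
      (ih fun i hi => hx i (Finset.mem_insert_of_mem hi))

/-- a monomial whose exponent is supported on variables of P lies in a high power of P -/
theorem monomial_mem_pow {P : Ideal (MvPolynomial (Fin N) K)} {a : Fin N →₀ ℕ}
    (ha : ∀ i ∈ a.support, (X i : MvPolynomial (Fin N) K) ∈ P) :
    (monomial a (1 : K) : MvPolynomial (Fin N) K) ∈ P ^ (∑ i ∈ a.support, a i) := by
  have hprod : (monomial a (1 : K) : MvPolynomial (Fin N) K)
      = ∏ i ∈ a.support, (X i : MvPolynomial (Fin N) K) ^ a i := by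
    rw [MvPolynomial.monomial_eq, map_one, one_mul, Finsupp.prod]
  rw [hprod]
  exact prod_mem_pow_sum P _ _ _ fun i hi => Ideal.pow_mem_pow (ha i hi) _

/-- phi fixes monomials avoiding the variables of P; in particular they are not in varSpan P -/
theorem monomial_not_mem_varSpan {P : Ideal (MvPolynomial (Fin N) K)} {c : Fin N →₀ ℕ}
    (hc : ∀ i ∈ c.support, (X i : MvPolynomial (Fin N) K) ∉ P) :
    (monomial c (1 : K) : MvPolynomial (Fin N) K) ∉ varSpan P := by
  classical
  intro hmem
  have h0 := varPhi_eq_zero_of_mem hmem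
  have hval : varPhi P (monomial c (1 : K)) = monomial c (1 : K) := by
    rw [varPhi, aeval_monomial, map_one, one_mul]
    have : ∀ i ∈ c.support,
        (if (X i : MvPolynomial (Fin N) K) ∈ P then (0 : MvPolynomial (Fin N) K) else X i) ^ c i
          = X i ^ c i := by
      intro i hi
      rw [if_neg (hc i hi)]
    rw [Finsupp.prod, Finset.prod_congr rfl this, ← Finsupp.prod]
    rw [MvPolynomial.monomial_eq, map_one, one_mul]
  rw [hval] at h0
  have : (1 : K) ≠ 0 := one_ne_zero
  exact (MvPolynomial.monomial_eq_zero.mp h0 |> this)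

/-- product of binomial coefficients -/
def natBin (b a : Fin N →₀ ℕ) : ℕ := ∏ i, (b i).choose (a i)

/-- multivariate Hasse derivative -/
noncomputable def hasse (a : Fin N →₀ ℕ) (f : MvPolynomial (Fin N) K) :
    MvPolynomial (Fin N) K :=
  ∑ b ∈ f.support, monomial (b - a) ((natBin b a : K) * coeff b f)

theorem hasse_eq_sum_of_subset (a : Fin N →₀ ℕ) (f : MvPolynomial (Fin N) K)
    {s : Finset (Fin N →₀ ℕ)} (hs : f.support ⊆ s) :
    hasse a f = ∑ b ∈ s, monomial (b - a) ((natBin b a : K) * coeff b f) := by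
  rw [hasse]
  apply Finset.sum_subset hs
  intro b _ hb
  rw [notMem_support_iff.mp hb, mul_zero, map_zero]

theorem hasse_add (a : Fin N →₀ ℕ) (f g : MvPolynomial (Fin N) K) :
    hasse a (f + g) = hasse a f + hasse a g := by
  classical
  rw [hasse_eq_sum_of_subset a (f + g) (MvPolynomial.support_add),
    hasse_eq_sum_of_subset a f (Finset.subset_union_left (s₂ := g.support)),
    hasse_eq_sum_of_subset a g (Finset.subset_union_right (s₁ := f.support)),
    ← Finset.sum_add_distrib]
  apply Finset.sum_congr rfl
  intro b _
  rw [MvPolynomial.coeff_add, mul_add, map_add]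

theorem hasse_monomial (a b : Fin N →₀ ℕ) (c : K) :
    hasse a (monomial b c) = monomial (b - a) ((natBin b a : K) * c) := by
  classical
  rw [hasse_eq_sum_of_subset a _ (MvPolynomial.support_monomial_subset (s := b) (a := c)),
    Finset.sum_singleton, MvPolynomial.coeff_monomial, if_pos rfl]

theorem hasse_zero_fun (a : Fin N →₀ ℕ) : hasse a (0 : MvPolynomial (Fin N) K) = 0 := by
  rw [hasse]; simp

theorem natBin_zero (b : Fin N →₀ ℕ) : natBin b 0 = 1 := by
  rw [natBin]; simp

theorem hasse_zero (f : MvPolynomial (Fin N) K) : hasse 0 f = f := by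
  rw [hasse]
  conv_rhs => rw [MvPolynomial.as_sum f]
  apply Finset.sum_congr rfl
  intro b _
  rw [natBin_zero, Nat.cast_one, one_mul, tsub_zero]

theorem hasse_sum {ι : Type*} (a : Fin N →₀ ℕ) (s : Finset ι)
    (f : ι → MvPolynomial (Fin N) K) :
    hasse a (∑ i ∈ s, f i) = ∑ i ∈ s, hasse a (f i) := by
  classical
  induction s using Finset.induction with
  | empty => simp [hasse_zero_fun]
  | @insert i s' hnot ih =>
    rw [Finset.sum_insert hnot, Finset.sum_insert hnot, hasse_add, ih]

/-- first/second components of a pi-antidiagonal element, as finsupps -/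
noncomputable def pfst (t : Fin N → ℕ × ℕ) : Fin N →₀ ℕ :=
  Finsupp.equivFunOnFinite.symm fun i => (t i).1

noncomputable def psnd (t : Fin N → ℕ × ℕ) : Fin N →₀ ℕ :=
  Finsupp.equivFunOnFinite.symm fun i => (t i).2

@[simp] theorem pfst_apply (t : Fin N → ℕ × ℕ) (i : Fin N) : pfst t i = (t i).1 := rfl
@[simp] theorem psnd_apply (t : Fin N → ℕ × ℕ) (i : Fin N) : psnd t i = (t i).2 := rfl

/-- the Leibniz rule for Hasse derivatives -/
theorem hasse_mul (a : Fin N →₀ ℕ) (f g : MvPolynomial (Fin N) K) :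
    hasse a (f * g) = ∑ t ∈ Fintype.piFinset (fun i => Finset.HasAntidiagonal.antidiagonal (a i)),
      hasse (pfst t) f * hasse (psnd t) g := by
  classical
  induction f using MvPolynomial.induction_on' generalizing g with
  | add p q hp hq =>
    rw [add_mul, hasse_add, hp, hq, ← Finset.sum_add_distrib]
    apply Finset.sum_congr rfl
    intro t _
    rw [hasse_add, add_mul]
  | monomial b c =>
    induction g using MvPolynomial.induction_on' with
    | add p q hp hq =>
      rw [mul_add, hasse_add, hp, hq, ← Finset.sum_add_distrib]
      apply Finset.sum_congr rfl
      intro t _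
      rw [hasse_add, mul_add]
    | monomial b' c' =>
      rw [MvPolynomial.monomial_mul, hasse_monomial]
      have hterm : ∀ t ∈ Fintype.piFinset (fun i => Finset.HasAntidiagonal.antidiagonal (a i)),
          hasse (pfst t) (monomial b c) * hasse (psnd t) (monomial b' c')
          = monomial (b + b' - a)
              (((natBin b (pfst t) : K) * (natBin b' (psnd t) : K)) * (c * c')) := by
        intro t ht
        rw [Fintype.mem_piFinset] at ht
        rw [hasse_monomial, hasse_monomial, MvPolynomial.monomial_mul]
        by_cases hle : (∀ i, (t i).1 ≤ b i) ∧ (∀ i, (t i).2 ≤ b' i)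
        · have hexp : (b - pfst t) + (b' - psnd t) = b + b' - a := by
            ext i
            have h1 := (ht i)
            rw [Finset.HasAntidiagonal.mem_antidiagonal] at h1
            have h2 := hle.1 i
            have h3 := hle.2 i
            simp only [Finsupp.add_apply, Finsupp.tsub_apply, pfst_apply, psnd_apply]
            omega
          rw [hexp]
          ring_nf
        · have hzero : (natBin b (pfst t) : K) * (natBin b' (psnd t) : K) = 0 := by
            rw [not_and_or] at hle
            rcases hle with h | h
            · push_neg at h
              obtain ⟨i, hi⟩ := h
              have : natBin b (pfst t) = 0 := by
                rw [natBin]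
                apply Finset.prod_eq_zero (Finset.mem_univ i)
                rw [pfst_apply]
                exact Nat.choose_eq_zero_of_lt hi
              rw [this, Nat.cast_zero, zero_mul]
            · push_neg at h
              obtain ⟨i, hi⟩ := h
              have : natBin b' (psnd t) = 0 := by
                rw [natBin]
                apply Finset.prod_eq_zero (Finset.mem_univ i)
                rw [psnd_apply]
                exact Nat.choose_eq_zero_of_lt hi
              rw [this, Nat.cast_zero, mul_zero]
          have h1 : (natBin b (pfst t) : K) * c * ((natBin b' (psnd t) : K) * c')
              = ((natBin b (pfst t) : K) * (natBin b' (psnd t) : K)) * (c * c') := by ring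
          simp only [h1, hzero, zero_mul, map_zero]
      rw [Finset.sum_congr rfl hterm, ← map_sum, ← Finset.sum_mul]
      have hnat : natBin (b + b') a = ∑ t ∈ Fintype.piFinset
          (fun i => Finset.HasAntidiagonal.antidiagonal (a i)), natBin b (pfst t) * natBin b' (psnd t) := by
        have h2 : ∀ t ∈ Fintype.piFinset (fun i => Finset.HasAntidiagonal.antidiagonal (a i)),
            natBin b (pfst t) * natBin b' (psnd t)
              = ∏ i, (b i).choose ((t i).1) * (b' i).choose ((t i).2) := by
          intro t _
          rw [natBin, natBin, ← Finset.prod_mul_distrib]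
          simp
        rw [Finset.sum_congr rfl h2, ← Finset.prod_univ_sum
          (t := fun i => Finset.HasAntidiagonal.antidiagonal (a i))
          (f := fun i jk => (b i).choose jk.1 * (b' i).choose jk.2), natBin]
        apply Finset.prod_congr rfl
        intro i _
        rw [Finsupp.add_apply, Nat.add_choose_eq]
      rw [hnat]
      push_cast
      ring



def weight (a : Fin N →₀ ℕ) : ℕ := ∑ i, a i

theorem weight_add_weight_of_mem {a : Fin N →₀ ℕ} {t : Fin N → ℕ × ℕ}
    (ht : t ∈ Fintype.piFinset (fun i => Finset.HasAntidiagonal.antidiagonal (a i))) :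
    weight (pfst t) + weight (psnd t) = weight a := by
  rw [Fintype.mem_piFinset] at ht
  rw [weight, weight, weight, ← Finset.sum_add_distrib]
  apply Finset.sum_congr rfl
  intro i _
  have := ht i
  rw [Finset.HasAntidiagonal.mem_antidiagonal] at this
  simpa using this

theorem one_le_weight {a : Fin N →₀ ℕ} (ha : a ≠ 0) : 1 ≤ weight a := by
  by_contra h
  push_neg at h
  rw [Nat.lt_one_iff, weight, Finset.sum_eq_zero_iff] at h
  exact ha (Finsupp.ext fun i => h i (Finset.mem_univ i))

theorem pfst_eq_zero_iff {a : Fin N →₀ ℕ} {t : Fin N → ℕ × ℕ}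
    (ht : t ∈ Fintype.piFinset (fun i => Finset.HasAntidiagonal.antidiagonal (a i))) :
    pfst t = 0 ↔ t = fun i => ((0 : ℕ), a i) := by
  rw [Fintype.mem_piFinset] at ht
  constructor
  · intro h
    funext i
    have h1 : (t i).1 = 0 := by
      have := DFunLike.congr_fun h i
      simpa using this
    have h2 := ht i
    rw [Finset.HasAntidiagonal.mem_antidiagonal] at h2
    have : (t i).2 = a i := by omega
    rw [Prod.ext_iff]
    exact ⟨h1, this⟩
  · intro h
    ext i
    rw [pfst_apply, h]
    rfl

theorem psnd_of_t0 (a : Fin N →₀ ℕ) : psnd (fun i => ((0 : ℕ), a i)) = a := by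
  ext i; rw [psnd_apply]

theorem pfst_of_t0 (a : Fin N →₀ ℕ) : pfst (fun i => ((0 : ℕ), a i)) = 0 := by
  ext i; rw [pfst_apply]; rfl

theorem t0_mem (a : Fin N →₀ ℕ) :
    (fun i => ((0 : ℕ), a i)) ∈ Fintype.piFinset (fun i => Finset.HasAntidiagonal.antidiagonal (a i)) := by
  rw [Fintype.mem_piFinset]
  intro i
  rw [Finset.HasAntidiagonal.mem_antidiagonal, zero_add]

/-- e7: Hasse derivatives map powers of ideals into lower powers -/
theorem hasse_mem_pow {p : Ideal (MvPolynomial (Fin N) K)} :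
    ∀ (k : ℕ) (u : MvPolynomial (Fin N) K), u ∈ p ^ k → ∀ (a : Fin N →₀ ℕ),
      hasse a u ∈ p ^ (k - weight a) := by
  intro k
  induction k with
  | zero => intro u hu a; simpa using hu
  | succ k ih =>
    intro u hu a
    rw [pow_succ] at hu
    refine Submodule.mul_induction_on hu (fun x hx y hy => ?_) (fun x y hx hy => ?_)
    · rw [hasse_mul]
      apply Ideal.sum_mem
      intro t ht
      have hw := weight_add_weight_of_mem ht
      by_cases h0 : psnd t = 0
      · have hw2 : weight (pfst t) = weight a := by
          rw [← hw, h0]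
          simp [weight]
        have h1 : hasse (pfst t) x ∈ p ^ (k - weight (pfst t)) := ih x hx _
        have h2 : hasse (psnd t) y = y := by rw [h0, hasse_zero]
        rw [h2]
        have h3 : hasse (pfst t) x * y ∈ p ^ (k - weight (pfst t)) * p :=
          Ideal.mul_mem_mul h1 hy
        rw [← pow_succ] at h3
        refine Ideal.pow_le_pow_right ?_ h3
        omega
      · have hwv : 1 ≤ weight (psnd t) := one_le_weight h0
        have h1 : hasse (pfst t) x ∈ p ^ (k - weight (pfst t)) := ih x hx _
        have h3 : hasse (pfst t) x * hasse (psnd t) y ∈ p ^ (k - weight (pfst t)) :=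
          Ideal.mul_mem_right _ _ h1
        refine Ideal.pow_le_pow_right ?_ h3
        omega
    · rw [hasse_add]
      exact Ideal.add_mem _ hx hy

/-- e8: Hasse derivatives of symbolic elements lie in the prime -/
theorem hasse_mem_prime {p : Ideal (MvPolynomial (Fin N) K)} (hp : p.IsPrime)
    {s f : MvPolynomial (Fin N) K} (hs : s ∉ p) {ℓ : ℕ} (hsf : s * f ∈ p ^ ℓ) :
    ∀ (a : Fin N →₀ ℕ), weight a < ℓ → hasse a f ∈ p := by
  have H : ∀ (n : ℕ) (a : Fin N →₀ ℕ), weight a = n → weight a < ℓ → hasse a f ∈ p := by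
    intro n
    induction n using Nat.strong_induction_on with
    | _ n ihn =>
      intro a han haℓ
      -- the full derivative of s*f is in p
      have hmem : hasse a (s * f) ∈ p := by
        have h1 := hasse_mem_pow ℓ (s * f) hsf a
        have h2 : p ^ (ℓ - weight a) ≤ p ^ 1 := Ideal.pow_le_pow_right (by omega)
        rw [pow_one] at h2
        exact h2 h1
      rw [hasse_mul] at hmem
      set T := Fintype.piFinset (fun i => Finset.HasAntidiagonal.antidiagonal (a i)) with hT
      set t0 : Fin N → ℕ × ℕ := fun i => ((0 : ℕ), a i) with ht0
      have ht0T : t0 ∈ T := t0_mem a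
      rw [← Finset.add_sum_erase T _ ht0T] at hmem
      have hrest : ∑ t ∈ T.erase t0, hasse (pfst t) s * hasse (psnd t) f ∈ p := by
        apply Ideal.sum_mem
        intro t ht
        obtain ⟨htne, htT⟩ := Finset.mem_erase.mp ht
        have hne : pfst t ≠ 0 := fun h => htne ((pfst_eq_zero_iff htT).mp h)
        have hw := weight_add_weight_of_mem htT
        have h1 : weight (psnd t) < n := by
          have := one_le_weight hne
          omega
        exact Ideal.mul_mem_left _ _ (ihn _ h1 _ rfl (by omega))
      have hfirst : hasse (pfst t0) s * hasse (psnd t0) f ∈ p := by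
        have := Ideal.sub_mem _ hmem hrest
        simpa using this
      rw [pfst_of_t0, psnd_of_t0, hasse_zero] at hfirst
      exact (hp.mem_or_mem hfirst).resolve_left hs
  exact fun a h => H (weight a) a rfl h


variable (mo : MonomialOrder (Fin N))

theorem natBin_eq_one {b a : Fin N →₀ ℕ} (hab : ∀ i, a i = b i ∨ a i = 0) :
    natBin b a = 1 := by
  rw [natBin]
  apply Finset.prod_eq_one
  intro i _
  rcases hab i with h | h <;> rw [h] <;> simp [Nat.choose_self]

theorem tsub_add_cancel_finsupp {a b : Fin N →₀ ℕ} (h : ∀ i, a i ≤ b i) :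
    b - a + a = b := by
  ext i
  have := h i
  simp only [Finsupp.add_apply, Finsupp.tsub_apply]
  omega

/-- e9: the Hasse derivative along part of the lead exponent has lead exponent `b - a` and
the same leading coefficient -/
theorem hasse_lead {f : MvPolynomial (Fin N) K} (hf : f ≠ 0) {a : Fin N →₀ ℕ}
    (hab : ∀ i, a i = (leadExp mo f) i ∨ a i = 0) :
    hasse a f ≠ 0 ∧ leadExp mo (hasse a f) = leadExp mo f - a := by
  classical
  set b := leadExp mo f with hbdef
  have hble : ∀ i, a i ≤ b i := by
    intro i
    rcases hab i with h | h <;> omega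
  have hbsupp : b ∈ f.support := leadExp_mem_support mo hf
  -- coefficient computation
  have hcoeff : coeff (b - a) (hasse a f) = coeff b f := by
    rw [hasse, MvPolynomial.coeff_sum]
    rw [Finset.sum_eq_single b]
    · rw [MvPolynomial.coeff_monomial, if_pos rfl, natBin_eq_one hab, Nat.cast_one, one_mul]
    · intro b' hb' hne
      rw [MvPolynomial.coeff_monomial]
      split
      · rename_i hcond
        by_cases hle : ∀ i, a i ≤ b' i
        · exfalso
          apply hne
          have h1 : b' - a + a = b' := tsub_add_cancel_finsupp hle
          have h2 : b - a + a = b := tsub_add_cancel_finsupp hble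
          rw [← h1, hcond, h2]
        · push_neg at hle
          obtain ⟨i, hi⟩ := hle
          have : natBin b' a = 0 := by
            rw [natBin]
            exact Finset.prod_eq_zero (Finset.mem_univ i) (Nat.choose_eq_zero_of_lt hi)
          rw [this, Nat.cast_zero, zero_mul]
      · rfl
    · intro hb
      exact absurd hbsupp hb
  -- support bound
  have hsupp : ∀ c ∈ (hasse a f).support, mo.toSyn c ≤ mo.toSyn (b - a) := by
    intro c hc
    rw [mem_support_iff, hasse, MvPolynomial.coeff_sum] at hc
    obtain ⟨b', hb', hne⟩ := Finset.exists_ne_zero_of_sum_ne_zero hc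
    rw [MvPolynomial.coeff_monomial] at hne
    have hcond : b' - a = c := by
      by_contra h
      rw [if_neg h] at hne
      exact hne rfl
    rw [if_pos hcond] at hne
    have hbin : (natBin b' a : K) ≠ 0 := fun h => hne (by rw [h, zero_mul])
    have hbinN : natBin b' a ≠ 0 := fun h => hbin (by rw [h, Nat.cast_zero])
    have hle : ∀ i, a i ≤ b' i := by
      intro i
      by_contra hlt
      push_neg at hlt
      exact hbinN (Finset.prod_eq_zero (Finset.mem_univ i) (Nat.choose_eq_zero_of_lt hlt))
    have h1 : b' - a + a = b' := tsub_add_cancel_finsupp hle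
    have h2 : b - a + a = b := tsub_add_cancel_finsupp hble
    have h3 : mo.toSyn (b' - a) + mo.toSyn a ≤ mo.toSyn (b - a) + mo.toSyn a := by
      rw [← map_add, ← map_add, h1, h2]
      exact le_leadExp mo hb'
    rw [← hcond]
    exact le_of_add_le_add_right h3
  have hne0 : hasse a f ≠ 0 := by
    rw [MvPolynomial.ne_zero_iff]
    refine ⟨b - a, ?_⟩
    rw [hcoeff]
    exact coeff_leadExp_ne_zero mo hf
  refine ⟨hne0, leadExp_eq_of mo ?_ hsupp⟩
  rw [mem_support_iff, hcoeff]
  exact coeff_leadExp_ne_zero mo hf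

end FinN

end Aux

open Aux in
theorem stmt_1 (N : ℕ) (mo : MonomialOrder (Fin N)) (U : Ideal (MvPolynomial (Fin N) K))
    (hsq : IsSquarefreeMonomialIdeal (initialIdeal mo U))
    (heq : ∀ ℓ, 1 ≤ ℓ → symbolicPower (initialIdeal mo U) ℓ = initialIdeal mo U ^ ℓ) :
    ∀ ℓ, 1 ≤ ℓ → symbolicPower U ℓ = U ^ ℓ := by
  classical
  intro ℓ hℓ
  refine le_antisymm ?_ (pow_le_symbolicPower U ℓ)
  -- well-founded induction on the lead exponent
  suffices main : ∀ dsyn : mo.syn, ∀ f, f ∈ symbolicPower U ℓ →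
      mo.toSyn (leadExp mo f) = dsyn → f ∈ U ^ ℓ by
    intro f hf
    exact main _ f hf rfl
  intro dsyn
  refine wellFounded_lt.induction (C := fun ds => ∀ f, f ∈ symbolicPower U ℓ →
    mo.toSyn (leadExp mo f) = ds → f ∈ U ^ ℓ) dsyn ?_
  clear dsyn
  intro dsyn ih f hf hd
  by_cases hf0 : f = 0
  · rw [hf0]; exact zero_mem _
  set b := leadExp mo f with hbdef
  -- Step 1: the lead monomial of f is in the symbolic power of the initial ideal
  have hWsym : (monomial b (1 : K) : MvPolynomial (Fin N) K)
      ∈ symbolicPower (initialIdeal mo U) ℓ := by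
    rw [mem_symbolicPower_iff]
    intro P hPmin
    haveI hPp : P.IsPrime := hPmin.1.1
    have hPvar := minimalPrime_eq_varSpan hsq hPmin
    obtain ⟨p, hpmin, hple⟩ := exists_minimalPrime_initial_le mo hPp hPmin.1.2
    haveI hpp : p.IsPrime := hpmin.1.1
    have hfp := (mem_symbolicPower_iff.mp hf) p hpmin
    obtain ⟨s, hs, hsf⟩ := exists_smul_mem_of_mem_comap hfp
    -- the P-part of the lead exponent
    set a : Fin N →₀ ℕ := Finsupp.equivFunOnFinite.symm
      (fun i => if (X i : MvPolynomial (Fin N) K) ∈ P then b i else 0) with hadef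
    have ha_apply : ∀ i, a i
        = if (X i : MvPolynomial (Fin N) K) ∈ P then b i else 0 := fun i => rfl
    have hab : ∀ i, a i = b i ∨ a i = 0 := by
      intro i
      rw [ha_apply i]
      split
      · exact Or.inl rfl
      · exact Or.inr rfl
    have hble : ∀ i, a i ≤ b i := by intro i; rcases hab i with h | h <;> omega
    -- the weight of a is at least ℓ
    have hwa : ℓ ≤ weight a := by
      by_contra hlt
      push_neg at hlt
      have hdp : hasse a f ∈ p := hasse_mem_prime hpp hs hsf a hlt
      obtain ⟨hne0, hlead⟩ := hasse_lead mo hf0 (f := f) hab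
      have hmon : (monomial (b - a) (1 : K) : MvPolynomial (Fin N) K) ∈ P := by
        have := hple (lead_mem_initialIdeal mo hdp hne0)
        rwa [hlead] at this
      have hnot : (monomial (b - a) (1 : K) : MvPolynomial (Fin N) K) ∉ varSpan P := by
        apply monomial_not_mem_varSpan
        intro i hi hXi
        rw [Finsupp.mem_support_iff, Finsupp.tsub_apply] at hi
        rw [ha_apply i, if_pos hXi] at hi
        omega
      rw [hPvar] at hmon
      exact hnot hmon
    -- split the monomial
    have hsplit : (monomial b (1 : K) : MvPolynomial (Fin N) K)
        = monomial (b - a) 1 * monomial a 1 := by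
      rw [MvPolynomial.monomial_mul, one_mul, tsub_add_cancel_finsupp hble]
    have hamem : (monomial a (1 : K) : MvPolynomial (Fin N) K) ∈ P ^ ℓ := by
      have hvars : ∀ i ∈ a.support, (X i : MvPolynomial (Fin N) K) ∈ P := by
        intro i hi
        rw [Finsupp.mem_support_iff, ha_apply i] at hi
        by_contra hXi
        rw [if_neg hXi] at hi
        exact hi rfl
      have h1 := monomial_mem_pow (P := P) hvars
      have h2 : weight a = ∑ i ∈ a.support, a i := by
        rw [weight]
        exact (Finset.sum_subset (Finset.subset_univ _)
          (fun i _ hi => Finsupp.notMem_support_iff.mp hi)).symm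
      refine Ideal.pow_le_pow_right ?_ h1
      omega
    have hPmem : (monomial b (1 : K) : MvPolynomial (Fin N) K) ∈ P ^ ℓ := by
      rw [hsplit]
      exact Ideal.mul_mem_left _ _ hamem
    exact Ideal.le_comap_map hPmem
  rw [heq ℓ hℓ] at hWsym
  have hWpow : (monomial b (1 : K) : MvPolynomial (Fin N) K) ∈ initialIdeal mo (U ^ ℓ) :=
    initialIdeal_pow_le mo U ℓ hWsym
  -- extract an element of U^ℓ with dividing lead monomial
  rw [initialIdeal] at hWpow
  obtain ⟨gm, hgmS, d, hgm_eq, hdb⟩ := exists_le_of_monomial_mem_span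
    (fun g hg => by obtain ⟨f', _, _, rfl⟩ := hg; exact ⟨_, rfl⟩) hWpow
  obtain ⟨g, hgU, hg0, rfl⟩ := hgmS
  have hdlead : d = leadExp mo g := by
    rcases (MvPolynomial.monomial_eq_monomial_iff _ _ _ _).mp hgm_eq with ⟨h, -⟩ | ⟨h, -⟩
    · exact h.symm
    · exact absurd h one_ne_zero
  subst hdlead
  set d := leadExp mo g with hddef
  -- subtract a multiple of g to cancel the lead term
  set c0 : K := coeff b f * (coeff d g)⁻¹ with hc0def
  set q : MvPolynomial (Fin N) K := monomial (b - d) c0 * g with hqdef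
  have hdb' : ∀ i, d i ≤ b i := fun i => hdb i
  have hqU : q ∈ U ^ ℓ := Ideal.mul_mem_left _ _ hgU
  have hgd : coeff d g ≠ 0 := coeff_leadExp_ne_zero mo hg0
  have hcoeffq : coeff b q = coeff b f := by
    rw [hqdef, mul_comm, MvPolynomial.coeff_mul_monomial']
    rw [if_pos (tsub_le_self : b - d ≤ b)]
    have : b - (b - d) = d := by
      ext i
      have := hdb' i
      simp only [Finsupp.tsub_apply]
      omega
    rw [this, hc0def]
    field_simp
  set h : MvPolynomial (Fin N) K := f - q with hhdef
  by_cases hh0 : h = 0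
  · have : f = q := by
      have := sub_eq_zero.mp hh0
      exact this
    rw [this]
    exact hqU
  · -- h is a smaller counterexample
    have hhsym : h ∈ symbolicPower U ℓ :=
      Submodule.sub_mem _ hf (pow_le_symbolicPower U ℓ hqU)
    have hcoeffh : coeff b h = 0 := by
      rw [hhdef, MvPolynomial.coeff_sub, hcoeffq, sub_self]
    have hsupph : ∀ c ∈ h.support, mo.toSyn c ≤ mo.toSyn b := by
      intro c hc
      have hc' := MvPolynomial.support_sub _ f q hc
      rw [Finset.mem_union] at hc'
      rcases hc' with hc' | hc'
      · exact le_leadExp mo hc'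
      · have := MvPolynomial.support_mul _ _ hc'
        rw [Finset.mem_add] at this
        obtain ⟨e1, he1, e2, he2, rfl⟩ := this
        have he1' : e1 = b - d := by
          have := MvPolynomial.support_monomial_subset he1
          simpa using this
        have h2 : mo.toSyn e2 ≤ mo.toSyn d := le_leadExp mo he2
        rw [he1']
        calc mo.toSyn (b - d + e2) = mo.toSyn (b - d) + mo.toSyn e2 := map_add _ _ _
          _ ≤ mo.toSyn (b - d) + mo.toSyn d := by
              exact add_le_add (le_refl _) h2
          _ = mo.toSyn (b - d + d) := (map_add _ _ _).symm
          _ = mo.toSyn b := by rw [tsub_add_cancel_finsupp hdb']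
    have hlth : mo.toSyn (leadExp mo h) < mo.toSyn b := by
      have hle := hsupph _ (leadExp_mem_support mo hh0)
      rcases lt_or_eq_of_le hle with hlt | heq2
      · exact hlt
      · exfalso
        have : leadExp mo h = b := mo.toSyn.injective heq2
        have hmem := leadExp_mem_support mo hh0
        rw [this, mem_support_iff] at hmem
        exact hmem hcoeffh
    have hhU : h ∈ U ^ ℓ := by
      rw [hd] at hlth
      exact ih _ hlth h hhsym rfl
    have : f = h + q := by rw [hhdef]; ring
    rw [this]
    exact Ideal.add_mem _ hhU hqU
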